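/- Let r : ℤ → ℝ² be a nondegenerate discrete planar curve, closed with period 6, with t_{k+3} = −t_k and κ_k > 0 for all k ∈ ℤ (a convex hexagon with parallel and equi-length opposite sides; in particular κ_n = κ_{n+3} = 1/κ̄_{n+1} and κ_n·κ_{n+1}·κ_{n+2} = 1 for all n). Let F denote the inverse pentagram map, F(r)(k) = r(k) + (κ_k/κ̄_k)·(r(k) − r(k−1)). Then F(r) and F(F(r)) are nondegenerate, and the curvatures of the second iterate are those of r shifted by one index: the first and second centroaffine curvatures of F(F(r)) at n equal κ_{n+1} and κ̄_{n+1} respectively, for all n ∈ ℤ. Consequently F(F(r)) is affinely equivalent to r, i.e. convex hexagons with parallel and equi-length opposite sides are periodically stable under the inverse pentagram map. -/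

import Mathlib

/-- Planar determinant of two vectors in ℝ². -/
def det2 (u v : Fin 2 → ℝ) : ℝ := u 0 * v 1 - u 1 * v 0

/-- Edge tangent vector of a discrete planar curve. -/
def tang2 (r : ℤ → Fin 2 → ℝ) (k : ℤ) : Fin 2 → ℝ := r (k + 1) - r k

/-- Nondegeneracy of a discrete planar curve. -/
def Nondeg2 (r : ℤ → Fin 2 → ℝ) : Prop :=
  ∀ k : ℤ, det2 (tang2 r (k - 1)) (tang2 r k) ≠ 0

/-- First centroaffine curvature. -/
noncomputable def kappa2 (r : ℤ → Fin 2 → ℝ) (k : ℤ) : ℝ :=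
  det2 (tang2 r k) (tang2 r (k + 1)) / det2 (tang2 r (k - 1)) (tang2 r k)

/-- Second centroaffine curvature. -/
noncomputable def kbar2 (r : ℤ → Fin 2 → ℝ) (k : ℤ) : ℝ :=
  det2 (tang2 r (k - 1)) (tang2 r (k + 1)) / det2 (tang2 r (k - 1)) (tang2 r k)

/-- The inverse pentagram map, expressed in centroaffine invariants. -/
noncomputable def invPentagram (r : ℤ → Fin 2 → ℝ) (k : ℤ) : Fin 2 → ℝ :=
  r k + (kappa2 r k / kbar2 r k) • (r k - r (k - 1))

/-!
Write `d k = det (t k, t (k + 1))`. For a centrally symmetric hexagon, `t (k + 3) = -t k` makes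
`d` 3-periodic and gives `det (t (k - 1), t (k + 1)) = d (k + 1)`, so `κ k = d k / d (k - 1)`,
`κ̄ k = d (k + 1) / d (k - 1)`, and the inverse pentagram map moves `r k` along `t (k - 1)` by
`d k / d (k + 1)`. A direct computation shows that `F r` is again such a hexagon, whose edge
determinants are `N / d (k - 1)`, where `N = d (k-1) d k + d k d (k+1) + d (k+1) d (k-1)` does not
depend on `k` and is positive by convexity. Applied twice, the edge determinants of `F (F r)` are a
constant multiple of `d (k + 1)`, so `F (F r)` has the curvatures of `r` shifted by one.

Curvatures determine a nondegenerate curve up to an affine map, because its edges obey the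
recurrence `t (k + 1) = κ̄ k • t k - κ k • t (k - 1)`: the linear map matching the first two edges
of two curves with equal curvatures then matches all their edges.
-/

open Matrix

theorem det2_neg_left (u v : Fin 2 → ℝ) : det2 (-u) v = -det2 u v := by
  simp only [det2, Pi.neg_apply]; ring

theorem det2_neg_neg (u v : Fin 2 → ℝ) : det2 (-u) (-v) = det2 u v := by
  simp only [det2, Pi.neg_apply]; ring

theorem det2_comm (u v : Fin 2 → ℝ) : det2 u v = -det2 v u := by
  simp only [det2]; ring

theorem det2_self (u : Fin 2 → ℝ) : det2 u u = 0 := by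
  simp only [det2]; ring

theorem det2_smul_sub_smul (a b a' b' : ℝ) (u v u' v' : Fin 2 → ℝ) :
    det2 (a • u - b • v) (a' • u' - b' • v')
      = a * a' * det2 u u' - a * b' * det2 u v' - b * a' * det2 v u' + b * b' * det2 v v' := by
  simp only [det2, Pi.sub_apply, Pi.smul_apply, smul_eq_mul]; ring

theorem det2_smul_eq (u v w : Fin 2 → ℝ) :
    det2 u v • w = det2 u w • v - det2 v w • u := by
  ext i; fin_cases i <;> simp [det2] <;> ring

theorem det2_eq_det (u v : Fin 2 → ℝ) : det2 u v = (Matrix.of ![u, v]).det := by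
  simp [det2, Matrix.det_fin_two]

theorem exists_matrix_mulVec_eq (u v u' v' : Fin 2 → ℝ) (h : det2 u v ≠ 0) :
    ∃ A : Matrix (Fin 2) (Fin 2) ℝ, A.det = det2 u' v' / det2 u v ∧ A *ᵥ u = u' ∧ A *ᵥ v = v' := by
  set T : Matrix (Fin 2) (Fin 2) ℝ := (Matrix.of ![u, v])ᵀ
  set T' : Matrix (Fin 2) (Fin 2) ℝ := (Matrix.of ![u', v'])ᵀ
  have hT : IsUnit T.det := by
    rw [det_transpose, ← det2_eq_det]; exact h.isUnit
  have hcol : ∀ j, (T' * T⁻¹) *ᵥ T.col j = T'.col j := by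
    intro j
    rw [← mulVec_single_one, ← mulVec_single_one, mulVec_mulVec,
      nonsing_inv_mul_cancel_right _ _ hT]
  refine ⟨T' * T⁻¹, ?_, by simpa [T, T'] using hcol 0, by simpa [T, T'] using hcol 1⟩
  rw [det_mul, det_nonsing_inv, det_transpose, det_transpose, Ring.inverse_eq_inv',
    det2_eq_det, det2_eq_det, div_eq_mul_inv]

theorem eq_zero_of_recurrence {K V : Type*} [Field K] [AddCommGroup V] [Module K V]
    {u : ℤ → V} {a b : ℤ → K} (hb : ∀ k, b k ≠ 0)
    (hrec : ∀ k, u (k + 1) = a k • u k - b k • u (k - 1)) (h0 : u 0 = 0) (h1 : u 1 = 0)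
    (k : ℤ) : u k = 0 := by
  suffices ∀ k, u k = 0 ∧ u (k + 1) = 0 from (this k).1
  intro k
  induction k using Int.induction_on with
  | zero => exact ⟨h0, h1⟩
  | succ n ih => exact ⟨ih.2, by rw [hrec, ih.2, add_sub_cancel_right, ih.1]; simp⟩
  | pred n ih =>
    refine ⟨?_, by simpa using ih.1⟩
    have h := hrec (-n)
    rw [ih.1, ih.2, smul_zero, zero_sub, eq_comm, neg_eq_zero, smul_eq_zero] at h
    exact h.resolve_left (hb _)

theorem tang2_succ_eq (c : ℤ → Fin 2 → ℝ) {k : ℤ} (hk : det2 (tang2 c (k - 1)) (tang2 c k) ≠ 0) :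
    tang2 c (k + 1) = kbar2 c k • tang2 c k - kappa2 c k • tang2 c (k - 1) := by
  rw [kbar2, kappa2, div_eq_inv_mul, div_eq_inv_mul, mul_smul, mul_smul, ← smul_sub,
    ← det2_smul_eq, inv_smul_smul₀ hk]

theorem tang2_comp_add_one (c : ℤ → Fin 2 → ℝ) (k : ℤ) :
    tang2 (fun k => c (k + 1)) k = tang2 c (k + 1) := rfl

theorem kappa2_comp_add_one (c : ℤ → Fin 2 → ℝ) (k : ℤ) :
    kappa2 (fun k => c (k + 1)) k = kappa2 c (k + 1) := by
  simp only [kappa2, tang2_comp_add_one, sub_add_cancel, add_sub_cancel_right]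

theorem kbar2_comp_add_one (c : ℤ → Fin 2 → ℝ) (k : ℤ) :
    kbar2 (fun k => c (k + 1)) k = kbar2 c (k + 1) := by
  simp only [kbar2, tang2_comp_add_one, sub_add_cancel, add_sub_cancel_right]

theorem Nondeg2.comp_add_one {c : ℤ → Fin 2 → ℝ} (hc : Nondeg2 c) :
    Nondeg2 (fun k => c (k + 1)) := by
  intro k
  simpa only [tang2_comp_add_one, sub_add_cancel, add_sub_cancel_right] using hc (k + 1)

theorem kappa2_ne_zero {c : ℤ → Fin 2 → ℝ} (hc : Nondeg2 c) (k : ℤ) : kappa2 c k ≠ 0 :=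
  div_ne_zero (by simpa using hc (k + 1)) (hc k)

theorem exists_affine_of_curvatures_eq {c c' : ℤ → Fin 2 → ℝ} (hc : Nondeg2 c) (hc' : Nondeg2 c')
    (hκ : ∀ k, kappa2 c' k = kappa2 c k) (hκbar : ∀ k, kbar2 c' k = kbar2 c k) :
    ∃ (A : Matrix (Fin 2) (Fin 2) ℝ) (C : Fin 2 → ℝ), A.det ≠ 0 ∧ ∀ k, c' k = A *ᵥ c k + C := by
  obtain ⟨A, hdet, h0, h1⟩ := exists_matrix_mulVec_eq (tang2 c 0) (tang2 c 1) (tang2 c' 0)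
    (tang2 c' 1) (by simpa using hc 1)
  have htang (k : ℤ) : tang2 c' k = A *ᵥ tang2 c k := by
    refine sub_eq_zero.mp (eq_zero_of_recurrence (u := fun k => tang2 c' k - A *ᵥ tang2 c k)
      (a := kbar2 c) (kappa2_ne_zero hc) (fun k => ?_) (by simp [h0]) (by simp [h1]) k)
    rw [tang2_succ_eq c' (hc' k), tang2_succ_eq c (hc k), hκ, hκbar, mulVec_sub, mulVec_smul,
      mulVec_smul]
    module
  have hper : Function.Periodic (fun k => c' k - A *ᵥ c k) 1 := by
    intro k
    have := htang k
    rw [tang2, tang2, mulVec_sub] at this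
    show c' (k + 1) - A *ᵥ c (k + 1) = c' k - A *ᵥ c k
    rw [sub_eq_sub_iff_sub_eq_sub, this]
  refine ⟨A, c' 0 - A *ᵥ c 0, hdet ▸ div_ne_zero (by simpa using hc' 1) (by simpa using hc 1),
    fun k => ?_⟩
  have h := hper.int_mul k 0
  simp only [zero_add, mul_one, Int.cast_id] at h
  rw [← h, add_sub_cancel]

def edgeDet (c : ℤ → Fin 2 → ℝ) (k : ℤ) : ℝ := det2 (tang2 c k) (tang2 c (k + 1))

theorem det2_tang2_sub_one (c : ℤ → Fin 2 → ℝ) (k : ℤ) :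
    det2 (tang2 c (k - 1)) (tang2 c k) = edgeDet c (k - 1) := by
  rw [edgeDet, sub_add_cancel]

theorem kappa2_eq_edgeDet_div (c : ℤ → Fin 2 → ℝ) (k : ℤ) :
    kappa2 c k = edgeDet c k / edgeDet c (k - 1) := by
  rw [kappa2, det2_tang2_sub_one]; rfl

theorem nondeg2_of_edgeDet_ne_zero {c : ℤ → Fin 2 → ℝ} (hc : ∀ k, edgeDet c k ≠ 0) :
    Nondeg2 c := fun k => det2_tang2_sub_one c k ▸ hc (k - 1)

/-- Convexity is encoded as `κ > 0`: consecutive edge determinants have the same sign. -/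
structure IsSymmHexagon (c : ℤ → Fin 2 → ℝ) : Prop where
  tang2_add_three (k : ℤ) : tang2 c (k + 3) = -tang2 c k
  edgeDet_mul_pos (k : ℤ) : 0 < edgeDet c k * edgeDet c (k + 1)

def edgeDetPairSum (c : ℤ → Fin 2 → ℝ) (k : ℤ) : ℝ :=
  edgeDet c (k - 1) * edgeDet c k + edgeDet c k * edgeDet c (k + 1)
    + edgeDet c (k + 1) * edgeDet c (k - 1)

namespace IsSymmHexagon

variable {c : ℤ → Fin 2 → ℝ}

theorem of_kappa2_pos (hopp : ∀ k, tang2 c (k + 3) = -tang2 c k) (hκ : ∀ k, 0 < kappa2 c k) :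
    IsSymmHexagon c where
  tang2_add_three := hopp
  edgeDet_mul_pos k := by
    have h := hκ (k + 1)
    rw [kappa2_eq_edgeDet_div, add_sub_cancel_right] at h
    rcases div_pos_iff.mp h with ⟨h1, h2⟩ | ⟨h1, h2⟩
    · exact mul_pos h2 h1
    · exact mul_pos_of_neg_of_neg h2 h1

theorem edgeDet_ne_zero (hc : IsSymmHexagon c) (k : ℤ) : edgeDet c k ≠ 0 :=
  left_ne_zero_of_mul (hc.edgeDet_mul_pos k).ne'

theorem nondeg2 (hc : IsSymmHexagon c) : Nondeg2 c :=
  nondeg2_of_edgeDet_ne_zero hc.edgeDet_ne_zero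

theorem edgeDet_add_three (hc : IsSymmHexagon c) (k : ℤ) : edgeDet c (k + 3) = edgeDet c k := by
  rw [edgeDet, edgeDet, add_right_comm, hc.tang2_add_three, hc.tang2_add_three, det2_neg_neg]

theorem edgeDet_add_two (hc : IsSymmHexagon c) (k : ℤ) :
    edgeDet c (k + 2) = edgeDet c (k - 1) := by
  rw [← hc.edgeDet_add_three (k - 1), show k - 1 + 3 = k + 2 by ring]

theorem det2_tang2_sub_one_add_one (hc : IsSymmHexagon c) (k : ℤ) :
    det2 (tang2 c (k - 1)) (tang2 c (k + 1)) = edgeDet c (k + 1) := by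
  have h : tang2 c (k - 1) = -tang2 c (k + 1 + 1) := by
    rw [show k + 1 + 1 = k - 1 + 3 by ring, hc.tang2_add_three, neg_neg]
  rw [edgeDet, h, det2_neg_left, det2_comm, neg_neg]

theorem kbar2_eq_edgeDet_div (hc : IsSymmHexagon c) (k : ℤ) :
    kbar2 c k = edgeDet c (k + 1) / edgeDet c (k - 1) := by
  rw [kbar2, det2_tang2_sub_one, hc.det2_tang2_sub_one_add_one]

theorem invPentagram_eq (hc : IsSymmHexagon c) (k : ℤ) :
    invPentagram c k = c k + (edgeDet c k / edgeDet c (k + 1)) • tang2 c (k - 1) := by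
  rw [invPentagram, kappa2_eq_edgeDet_div, hc.kbar2_eq_edgeDet_div,
    div_div_div_cancel_right₀ (hc.edgeDet_ne_zero _), tang2, sub_add_cancel]

theorem tang2_invPentagram (hc : IsSymmHexagon c) (k : ℤ) :
    tang2 (invPentagram c) k = (1 + edgeDet c (k + 1) / edgeDet c (k - 1)) • tang2 c k
      - (edgeDet c k / edgeDet c (k + 1)) • tang2 c (k - 1) := by
  rw [tang2, hc.invPentagram_eq, hc.invPentagram_eq, add_assoc k 1 1, one_add_one_eq_two,
    hc.edgeDet_add_two, add_sub_cancel_right]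
  have hstep : c (k + 1) = c k + tang2 c k := (add_sub_cancel _ _).symm
  rw [hstep]
  module

theorem edgeDetPairSum_add_one (hc : IsSymmHexagon c) (k : ℤ) :
    edgeDetPairSum c (k + 1) = edgeDetPairSum c k := by
  rw [edgeDetPairSum, edgeDetPairSum, add_sub_cancel_right, add_assoc k 1 1, one_add_one_eq_two,
    hc.edgeDet_add_two]
  ring

theorem edgeDetPairSum_eq (hc : IsSymmHexagon c) (k : ℤ) :
    edgeDetPairSum c k = edgeDetPairSum c 0 := by
  simpa using (Function.Periodic.int_mul hc.edgeDetPairSum_add_one k) 0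

theorem edgeDetPairSum_pos (hc : IsSymmHexagon c) (k : ℤ) : 0 < edgeDetPairSum c k := by
  have h₁ := hc.edgeDet_mul_pos (k - 1)
  have h₂ := hc.edgeDet_mul_pos k
  rw [sub_add_cancel] at h₁
  have h₃ : 0 < edgeDet c (k + 1) * edgeDet c (k - 1) := by
    refine pos_of_mul_pos_right (a := edgeDet c k ^ 2) ?_ (sq_nonneg _)
    nlinarith [mul_pos h₁ h₂]
  unfold edgeDetPairSum
  positivity

theorem edgeDet_invPentagram (hc : IsSymmHexagon c) (k : ℤ) :
    edgeDet (invPentagram c) k = edgeDetPairSum c 0 / edgeDet c (k - 1) := by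
  rw [edgeDet, hc.tang2_invPentagram, hc.tang2_invPentagram, add_assoc k 1 1, one_add_one_eq_two,
    hc.edgeDet_add_two, add_sub_cancel_right, det2_smul_sub_smul, det2_self,
    hc.det2_tang2_sub_one_add_one, det2_tang2_sub_one, ← edgeDet, ← hc.edgeDetPairSum_eq k,
    edgeDetPairSum]
  have hm := hc.edgeDet_ne_zero (k - 1)
  have h0 := hc.edgeDet_ne_zero k
  have hp := hc.edgeDet_ne_zero (k + 1)
  field_simp
  ring

protected theorem invPentagram (hc : IsSymmHexagon c) : IsSymmHexagon (invPentagram c) where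
  tang2_add_three k := by
    rw [hc.tang2_invPentagram, hc.tang2_invPentagram, show k + 3 + 1 = k + 1 + 3 by ring,
      show k + 3 - 1 = k - 1 + 3 by ring, hc.edgeDet_add_three, hc.edgeDet_add_three,
      hc.edgeDet_add_three, hc.tang2_add_three, hc.tang2_add_three]
    module
  edgeDet_mul_pos k := by
    rw [hc.edgeDet_invPentagram, hc.edgeDet_invPentagram, add_sub_cancel_right, div_mul_div_comm]
    refine div_pos (mul_pos (hc.edgeDetPairSum_pos 0) (hc.edgeDetPairSum_pos 0)) ?_
    simpa using hc.edgeDet_mul_pos (k - 1)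

theorem exists_edgeDet_invPentagram_invPentagram (hc : IsSymmHexagon c) :
    ∃ a : ℝ, a ≠ 0 ∧ ∀ k, edgeDet (invPentagram (invPentagram c)) k = a * edgeDet c (k + 1) := by
  refine ⟨edgeDetPairSum (invPentagram c) 0 / edgeDetPairSum c 0,
    (div_pos (hc.invPentagram.edgeDetPairSum_pos 0) (hc.edgeDetPairSum_pos 0)).ne', fun k => ?_⟩
  rw [hc.invPentagram.edgeDet_invPentagram, hc.edgeDet_invPentagram, ← hc.edgeDet_add_three,
    show k - 1 - 1 + 3 = k + 1 by ring, div_div_eq_mul_div, mul_div_right_comm]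

theorem kappa2_invPentagram_invPentagram (hc : IsSymmHexagon c) (k : ℤ) :
    kappa2 (invPentagram (invPentagram c)) k = kappa2 c (k + 1) := by
  obtain ⟨a, ha, hdet⟩ := hc.exists_edgeDet_invPentagram_invPentagram
  rw [kappa2_eq_edgeDet_div, kappa2_eq_edgeDet_div, hdet, hdet, sub_add_cancel,
    add_sub_cancel_right, mul_div_mul_left _ _ ha]

theorem kbar2_invPentagram_invPentagram (hc : IsSymmHexagon c) (k : ℤ) :
    kbar2 (invPentagram (invPentagram c)) k = kbar2 c (k + 1) := by
  obtain ⟨a, ha, hdet⟩ := hc.exists_edgeDet_invPentagram_invPentagram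
  rw [hc.invPentagram.invPentagram.kbar2_eq_edgeDet_div, hc.kbar2_eq_edgeDet_div, hdet, hdet,
    sub_add_cancel, add_sub_cancel_right, mul_div_mul_left _ _ ha]

end IsSymmHexagon

theorem stmt_19_general (r : ℤ → Fin 2 → ℝ)
    (hopp : ∀ k : ℤ, tang2 r (k + 3) = -tang2 r k)
    (hκpos : ∀ k : ℤ, 0 < kappa2 r k) :
    Nondeg2 (invPentagram r) ∧
      Nondeg2 (invPentagram (invPentagram r)) ∧
      (∀ n : ℤ, kappa2 (invPentagram (invPentagram r)) n = kappa2 r (n + 1) ∧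
        kbar2 (invPentagram (invPentagram r)) n = kbar2 r (n + 1)) ∧
      ∃ (A : Matrix (Fin 2) (Fin 2) ℝ) (C : Fin 2 → ℝ), A.det ≠ 0 ∧
        ∀ k : ℤ, invPentagram (invPentagram r) k = A.mulVec (r (k + 1)) + C := by
  have hr := IsSymmHexagon.of_kappa2_pos hopp hκpos
  refine ⟨hr.invPentagram.nondeg2, hr.invPentagram.invPentagram.nondeg2,
    fun n => ⟨hr.kappa2_invPentagram_invPentagram n, hr.kbar2_invPentagram_invPentagram n⟩, ?_⟩
  exact exists_affine_of_curvatures_eq hr.nondeg2.comp_add_one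
    hr.invPentagram.invPentagram.nondeg2
    (fun k => by rw [kappa2_comp_add_one, hr.kappa2_invPentagram_invPentagram])
    (fun k => by rw [kbar2_comp_add_one, hr.kbar2_invPentagram_invPentagram])

/-- Convex hexagons with parallel, equi-length opposite sides are periodically stable
under the inverse pentagram map: the second iterate has the curvatures of the original
hexagon shifted by one index, hence is affinely equivalent to it. -/
theorem stmt_19 (r : ℤ → Fin 2 → ℝ) (hr : Nondeg2 r)
    (hclosed : ∀ k : ℤ, r (k + 6) = r k)
    (hopp : ∀ k : ℤ, tang2 r (k + 3) = -tang2 r k)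
    (hκpos : ∀ k : ℤ, 0 < kappa2 r k) :
    Nondeg2 (invPentagram r) ∧
      Nondeg2 (invPentagram (invPentagram r)) ∧
      (∀ n : ℤ, kappa2 (invPentagram (invPentagram r)) n = kappa2 r (n + 1) ∧
        kbar2 (invPentagram (invPentagram r)) n = kbar2 r (n + 1)) ∧
      ∃ (A : Matrix (Fin 2) (Fin 2) ℝ) (C : Fin 2 → ℝ), A.det ≠ 0 ∧
        ∀ k : ℤ, invPentagram (invPentagram r) k = A.mulVec (r (k + 1)) + C :=
  stmt_19_general r hopp hκpos
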